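/- arXiv:2503.06133 — 4 statements merged into one kernel-verified Lean document; each statement's English description precedes it below -/
import Mathlib

section
/- Let Δ₁ and Δ₂ be balanced normal d-pseudomanifolds and let Δ₁ #_ψ Δ₂ be a balanced connected sum of Δ₁ and Δ₂. Then f_d(Δ₁ #_ψ Δ₂) = f_d(Δ₁) + f_d(Δ₂) − 2, and for every two-element subset {i,j} ⊆ [d], f_{d−2}^{ij}(Δ₁ #_ψ Δ₂) = f_{d−2}^{ij}(Δ₁) + f_{d−2}^{ij}(Δ₂) − 1; consequently ρ_ε(Δ₁ #_ψ Δ₂) = ρ_ε(Δ₁) + ρ_ε(Δ₂) for every cyclic permutation ε of [d]. -/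
/-- A finite abstract simplicial complex with vertex set contained in `ℕ`:
a finite collection of finite sets (faces) closed under taking subsets. -/
structure SComplex where
  faces : Finset (Finset ℕ)
  down_closed : ∀ σ ∈ faces, ∀ τ, τ ⊆ σ → τ ∈ faces

namespace SComplex

/-- The facets: the inclusion-maximal faces. -/
def facets (Δ : SComplex) : Finset (Finset ℕ) :=
  Δ.faces.filter fun σ => ∀ τ ∈ Δ.faces, σ ⊆ τ → σ = τ

/-- `Δ` is pure of dimension `d`: every facet has exactly `d+1` vertices. -/
def Pure (Δ : SComplex) (d : ℕ) : Prop :=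
  ∀ σ ∈ Δ.facets, σ.card = d + 1

/-- The link of a face `σ`:  `lk (σ,Δ) = {γ ∈ Δ : γ ∩ σ = ∅ and γ ∪ σ ∈ Δ}`. -/
def lk (Δ : SComplex) (σ : Finset ℕ) : SComplex where
  faces := Δ.faces.filter fun γ => γ ∩ σ = ∅ ∧ γ ∪ σ ∈ Δ.faces
  down_closed := by
    intro γ hγ τ hτ
    rw [Finset.mem_filter] at hγ ⊢
    refine ⟨Δ.down_closed γ hγ.1 τ hτ, ?_, ?_⟩
    · exact Finset.subset_empty.1 (hγ.2.1 ▸ Finset.inter_subset_inter hτ Finset.Subset.rfl)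
    · exact Δ.down_closed _ hγ.2.2 _ (Finset.union_subset_union hτ Finset.Subset.rfl)

/-- The number of vertices of a complex. -/
def vertCount (Δ : SComplex) : ℕ := (Δ.faces.filter fun σ => σ.card = 1).card

/-- The degree of a face: the number of vertices of its link. -/
def deg (Δ : SComplex) (σ : Finset ℕ) : ℕ := (Δ.lk σ).vertCount

/-- Connectivity of a complex: any two vertices are joined by an edge-path. -/
def Conn (Δ : SComplex) : Prop :=
  ∀ u v : ℕ, {u} ∈ Δ.faces → {v} ∈ Δ.faces →
    Relation.ReflTransGen (fun a b => a ≠ b ∧ ({a, b} : Finset ℕ) ∈ Δ.faces) u v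

/-- A normal `d`-pseudomanifold: a pure `d`-dimensional complex in which every
`(d-1)`-face is contained in exactly two facets, any two facets are connected by a
sequence of facets in which consecutive facets share a `(d-1)`-face, and the link of
every face of dimension at most `d-2` is connected. -/
def IsNormalPseudomanifold (Δ : SComplex) (d : ℕ) : Prop :=
  Δ.faces.Nonempty ∧ Δ.Pure d ∧
  (∀ σ ∈ Δ.faces, σ.card = d → (Δ.facets.filter fun τ => σ ⊆ τ).card = 2) ∧
  (∀ σ ∈ Δ.facets, ∀ τ ∈ Δ.facets,
    Relation.ReflTransGen
      (fun α β => α ∈ Δ.facets ∧ β ∈ Δ.facets ∧ (α ∩ β).card = d) σ τ) ∧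
  (∀ σ ∈ Δ.faces, σ.card + 1 ≤ d → (Δ.lk σ).Conn)

/-- The Euler characteristic `χ(Δ) = Σ_i (-1)^i f_i(Δ)`. -/
def eulerChar (Δ : SComplex) : ℤ :=
  ∑ σ ∈ Δ.faces.filter (fun σ => σ ≠ ∅), (-1 : ℤ) ^ (σ.card + 1)

/-- The geometric carrier `‖Δ‖` of a complex, realized in `ℝ^ℕ`. -/
def carrier (Δ : SComplex) : Set (ℕ → ℝ) :=
  {f | ∃ σ ∈ Δ.faces, (∀ v, v ∉ σ → f v = 0) ∧ (∀ v, 0 ≤ f v) ∧ ∑ v ∈ σ, f v = 1}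

/-- The 1-skeleton of `Δ`, as a simple graph on `ℕ`. -/
def graph (Δ : SComplex) : SimpleGraph ℕ where
  Adj u v := u ≠ v ∧ ({u, v} : Finset ℕ) ∈ Δ.faces
  symm := by
    constructor
    rintro u v ⟨h1, h2⟩
    exact ⟨h1.symm, by rwa [Finset.pair_comm]⟩
  loopless := ⟨fun v h => h.1 rfl⟩

end SComplex

/-- A balanced complex of dimension `d`: a simplicial complex together with a proper
vertex coloring by the `d+1` colors `[d] = {0,…,d}`. -/
structure BalancedComplex (d : ℕ) extends SComplex where
  κ : ℕ → Fin (d + 1)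
  proper : ∀ σ ∈ faces, ∀ u ∈ σ, ∀ v ∈ σ, κ u = κ v → u = v

namespace BalancedComplex

variable {d : ℕ}

/-- The flag f-number `f_S`: the number of faces with color set exactly `S`. -/
def fS (Δ : BalancedComplex d) (S : Finset (Fin (d + 1))) : ℕ :=
  (Δ.faces.filter fun σ => σ.image Δ.κ = S).card

/-- `f_i`: the number of `i`-dimensional faces. -/
def fNum (Δ : BalancedComplex d) (i : ℕ) : ℕ :=
  (Δ.faces.filter fun σ => σ.card = i + 1).card

/-- The rank-selected subcomplex `Δ_S`. -/
def restrict (Δ : BalancedComplex d) (S : Finset (Fin (d + 1))) : SComplex where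
  faces := Δ.faces.filter fun σ => σ.image Δ.κ ⊆ S
  down_closed := by
    intro σ hσ τ hτ
    rw [Finset.mem_filter] at hσ ⊢
    exact ⟨Δ.down_closed σ hσ.1 τ hτ, (Finset.image_subset_image hτ).trans hσ.2⟩

/-- `Γ_S(Δ) = f_S(Δ) - Σ_{i ∈ S} f_{{i}}(Δ)`. -/
def Gamma (Δ : BalancedComplex d) (S : Finset (Fin (d + 1))) : ℤ :=
  (Δ.fS S : ℤ) - ∑ i ∈ S, (Δ.fS {i} : ℤ)

/-- The balanced ε-genus
`ρ_ε(Δ) = 1 - ((1-d)/4)·f_d(Δ) - (1/2)·Σ_{i ∈ Z_{d+1}} f_{d-2}^{ε_i ε_{i+1}}(Δ)`,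
where a cyclic permutation of `[d]` is recorded as a permutation `ε` of `Fin (d+1)`
read cyclically. -/
def rho (Δ : BalancedComplex d) (ε : Equiv.Perm (Fin (d + 1))) : ℚ :=
  1 - (1 - (d : ℚ)) / 4 * (Δ.fNum d : ℚ)
    - (1 / 2) * ∑ i : Fin (d + 1), (Δ.fS (Finset.univ \ {ε i, ε (i + 1)}) : ℚ)

/-- The balanced genus `𝒢(Δ)`: the minimum of `ρ_ε(Δ)` over all cyclic permutations. -/
def genus (Δ : BalancedComplex d) : ℚ :=
  (Finset.univ.image Δ.rho).min'
    (Finset.Nonempty.image ⟨1, Finset.mem_univ 1⟩ Δ.rho)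

end BalancedComplex

/-- Let `Δ₁, Δ₂` be balanced normal `d`-pseudomanifolds and let
`Δ` be a balanced connected sum of them.  (The identification along the admissible
bijection `ψ` is presented with the common facet `σ` already identified: `σ` is a
facet of both, the vertex sets of `Δ₁` and `Δ₂` meet exactly in the vertices of `σ`,
the two colorings agree, and the faces of `Δ` are the faces of `Δ₁` and `Δ₂` with the
facet `σ` removed.)  Then `f_d(Δ) = f_d(Δ₁) + f_d(Δ₂) - 2`, for every two-element
`{i,j} ⊆ [d]` one has `f_{d-2}^{ij}(Δ) = f_{d-2}^{ij}(Δ₁) + f_{d-2}^{ij}(Δ₂) - 1`,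
and consequently `ρ_ε(Δ) = ρ_ε(Δ₁) + ρ_ε(Δ₂)` for every cyclic permutation `ε`. -/
theorem statement8 (d : ℕ) (Δ₁ Δ₂ Δ : BalancedComplex d)
    (h₁ : Δ₁.toSComplex.IsNormalPseudomanifold d)
    (h₂ : Δ₂.toSComplex.IsNormalPseudomanifold d)
    (σ : Finset ℕ)
    (hσ₁ : σ ∈ Δ₁.toSComplex.facets) (hσ₂ : σ ∈ Δ₂.toSComplex.facets)
    (hmeet : ∀ v : ℕ, ({v} : Finset ℕ) ∈ Δ₁.faces → ({v} : Finset ℕ) ∈ Δ₂.faces → v ∈ σ)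
    (hκ : ∀ v ∈ σ, Δ₁.κ v = Δ₂.κ v)
    (hfaces : Δ.faces = (Δ₁.faces ∪ Δ₂.faces).erase σ)
    (hκ₁ : ∀ v : ℕ, ({v} : Finset ℕ) ∈ Δ₁.faces → Δ.κ v = Δ₁.κ v)
    (hκ₂ : ∀ v : ℕ, ({v} : Finset ℕ) ∈ Δ₂.faces → Δ.κ v = Δ₂.κ v) :
    ((Δ.fNum d : ℤ) = (Δ₁.fNum d : ℤ) + (Δ₂.fNum d : ℤ) - 2) ∧
    (∀ i j : Fin (d + 1), i ≠ j →
      (Δ.fS (Finset.univ \ {i, j}) : ℤ) =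
        (Δ₁.fS (Finset.univ \ {i, j}) : ℤ) + (Δ₂.fS (Finset.univ \ {i, j}) : ℤ) - 1) ∧
    (∀ ε : Equiv.Perm (Fin (d + 1)), Δ.rho ε = Δ₁.rho ε + Δ₂.rho ε) := by
  classical
  have hσf₁ : σ ∈ Δ₁.faces := (Finset.mem_filter.1 hσ₁).1
  have hσf₂ : σ ∈ Δ₂.faces := (Finset.mem_filter.1 hσ₂).1
  have hcard : σ.card = d + 1 := h₁.2.1 σ hσ₁
  have hinj : Set.InjOn Δ₁.κ ↑σ := fun u hu v hv h =>
    Δ₁.proper σ hσf₁ u (Finset.mem_coe.1 hu) v (Finset.mem_coe.1 hv) h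
  have himσ : σ.image Δ₁.κ = Finset.univ := by
    apply Finset.eq_univ_of_card
    rw [Finset.card_image_of_injOn hinj, hcard, Fintype.card_fin]
  have hsub : ∀ τ ∈ Δ₁.faces, τ ∈ Δ₂.faces → τ ⊆ σ := by
    intro τ h1 h2 v hv
    exact hmeet v (Δ₁.down_closed τ h1 {v} (Finset.singleton_subset_iff.2 hv))
      (Δ₂.down_closed τ h2 {v} (Finset.singleton_subset_iff.2 hv))
  have hkeq₁ : ∀ τ ∈ Δ₁.faces, τ.image Δ.κ = τ.image Δ₁.κ := by
    intro τ hτ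
    apply Finset.image_congr
    intro v hv
    exact hκ₁ v (Δ₁.down_closed τ hτ {v} (Finset.singleton_subset_iff.2 hv))
  have hkeq₂ : ∀ τ ∈ Δ₂.faces, τ.image Δ.κ = τ.image Δ₂.κ := by
    intro τ hτ
    apply Finset.image_congr
    intro v hv
    exact hκ₂ v (Δ₂.down_closed τ hτ {v} (Finset.singleton_subset_iff.2 hv))
  have hkeqσ : ∀ τ ⊆ σ, τ.image Δ₂.κ = τ.image Δ₁.κ := by
    intro τ hτ
    apply Finset.image_congr
    intro v hv
    exact (hκ v (hτ hv)).symm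
  have himσ₂ : σ.image Δ₂.κ = Finset.univ := by
    rw [hkeqσ σ Finset.Subset.rfl, himσ]
  -- abbreviations
  set A : Finset (Fin (d + 1)) → Finset (Finset ℕ) :=
    fun S => Δ₁.faces.filter fun τ => τ.image Δ₁.κ = S with hA
  set B : Finset (Fin (d + 1)) → Finset (Finset ℕ) :=
    fun S => Δ₂.faces.filter fun τ => τ.image Δ₂.κ = S with hB
  -- the filtered faces of Δ
  have key : ∀ S : Finset (Fin (d + 1)),
      (Δ.faces.filter fun τ => τ.image Δ.κ = S) = (A S ∪ B S).erase σ := by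
    intro S
    ext τ
    simp only [Finset.mem_filter, Finset.mem_erase, Finset.mem_union, hfaces, hA, hB]
    constructor
    · rintro ⟨⟨hne, hmem⟩, him⟩
      refine ⟨hne, ?_⟩
      rcases hmem with h | h
      · exact Or.inl ⟨h, (hkeq₁ τ h).symm.trans him⟩
      · exact Or.inr ⟨h, (hkeq₂ τ h).symm.trans him⟩
    · rintro ⟨hne, h | h⟩
      · exact ⟨⟨hne, Or.inl h.1⟩, (hkeq₁ τ h.1).trans h.2⟩
      · exact ⟨⟨hne, Or.inr h.1⟩, (hkeq₂ τ h.1).trans h.2⟩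
  -- the intersection is a singleton
  have hint : ∀ S : Finset (Fin (d + 1)),
      A S ∩ B S = {σ.filter fun v => Δ₁.κ v ∈ S} := by
    intro S
    ext τ
    simp only [Finset.mem_inter, Finset.mem_filter, Finset.mem_singleton, hA, hB]
    constructor
    · rintro ⟨⟨h1, hi1⟩, ⟨h2, _⟩⟩
      have hτσ : τ ⊆ σ := hsub τ h1 h2
      ext v
      simp only [Finset.mem_filter]
      constructor
      · intro hv
        exact ⟨hτσ hv, hi1 ▸ Finset.mem_image_of_mem _ hv⟩
      · rintro ⟨hvσ, hvS⟩
        rw [← hi1] at hvS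
        obtain ⟨w, hw, hwv⟩ := Finset.mem_image.1 hvS
        have : w = v := hinj (Finset.mem_coe.2 (hτσ hw)) (Finset.mem_coe.2 hvσ) hwv
        exact this ▸ hw
    · rintro rfl
      have hτσ : (σ.filter fun v => Δ₁.κ v ∈ S) ⊆ σ := Finset.filter_subset _ _
      have him : (σ.filter fun v => Δ₁.κ v ∈ S).image Δ₁.κ = S := by
        apply Finset.Subset.antisymm
        · intro c hc
          obtain ⟨v, hv, rfl⟩ := Finset.mem_image.1 hc
          exact (Finset.mem_filter.1 hv).2
        · intro c hc
          have : c ∈ σ.image Δ₁.κ := himσ ▸ Finset.mem_univ c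
          obtain ⟨v, hv, rfl⟩ := Finset.mem_image.1 this
          exact Finset.mem_image_of_mem _ (Finset.mem_filter.2 ⟨hv, hc⟩)
      exact ⟨⟨Δ₁.down_closed σ hσf₁ _ hτσ, him⟩,
        ⟨Δ₂.down_closed σ hσf₂ _ hτσ, (hkeqσ _ hτσ).trans him⟩⟩
  -- the counting lemma for S ≠ univ
  have hcount : ∀ S : Finset (Fin (d + 1)), S ≠ Finset.univ →
      Δ.fS S + 1 = Δ₁.fS S + Δ₂.fS S := by
    intro S hS
    have hσA : σ ∉ A S := by
      simp only [hA, Finset.mem_filter, himσ]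
      rintro ⟨-, h⟩
      exact hS h.symm
    have hσB : σ ∉ B S := by
      simp only [hB, Finset.mem_filter, himσ₂]
      rintro ⟨-, h⟩
      exact hS h.symm
    have herase : (A S ∪ B S).erase σ = A S ∪ B S :=
      Finset.erase_eq_of_notMem (fun h => by
        rcases Finset.mem_union.1 h with h | h
        · exact hσA h
        · exact hσB h)
    have hc1 : (A S ∪ B S).card + (A S ∩ B S).card = (A S).card + (B S).card :=
      Finset.card_union_add_card_inter _ _
    have hc2 : (A S ∩ B S).card = 1 := by rw [hint S, Finset.card_singleton]
    show (Δ.faces.filter fun τ => τ.image Δ.κ = S).card + 1 = _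
    rw [key S, herase]
    rw [hc2] at hc1
    exact hc1
  -- fNum d = fS univ
  have hfnum : ∀ Γ : BalancedComplex d, Γ.fNum d = Γ.fS Finset.univ := by
    intro Γ
    unfold BalancedComplex.fNum BalancedComplex.fS
    congr 1
    apply Finset.filter_congr
    intro τ hτ
    have hinjτ : Set.InjOn Γ.κ ↑τ := fun u hu v hv h =>
      Γ.proper τ hτ u (Finset.mem_coe.1 hu) v (Finset.mem_coe.1 hv) h
    have hci : (τ.image Γ.κ).card = τ.card := Finset.card_image_of_injOn hinjτ
    constructor
    · intro h
      apply Finset.eq_univ_of_card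
      rw [hci, h, Fintype.card_fin]
    · intro h
      rw [h, Finset.card_univ, Fintype.card_fin] at hci
      exact hci.symm
  -- count for S = univ
  have hcuniv : Δ.fNum d + 2 = Δ₁.fNum d + Δ₂.fNum d := by
    rw [hfnum Δ, hfnum Δ₁, hfnum Δ₂]
    have hσA : σ ∈ A Finset.univ := by
      simp only [hA, Finset.mem_filter]
      exact ⟨hσf₁, himσ⟩
    have hσU : σ ∈ A Finset.univ ∪ B Finset.univ := Finset.mem_union_left _ hσA
    have hc1 : (A Finset.univ ∪ B Finset.univ).card + (A Finset.univ ∩ B Finset.univ).card =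
        (A Finset.univ).card + (B Finset.univ).card :=
      Finset.card_union_add_card_inter _ _
    have hc2 : (A Finset.univ ∩ B Finset.univ).card = 1 := by
      rw [hint Finset.univ, Finset.card_singleton]
    have hc3 : ((A Finset.univ ∪ B Finset.univ).erase σ).card =
        (A Finset.univ ∪ B Finset.univ).card - 1 := Finset.card_erase_of_mem hσU
    have hc4 : 1 ≤ (A Finset.univ ∪ B Finset.univ).card := Finset.card_pos.2 ⟨σ, hσU⟩
    have hA1 : Δ₁.fS Finset.univ = (A Finset.univ).card := rfl
    have hB1 : Δ₂.fS Finset.univ = (B Finset.univ).card := rfl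
    show (Δ.faces.filter fun τ => τ.image Δ.κ = Finset.univ).card + 2 = _
    rw [key Finset.univ, hc3, hA1, hB1]
    omega
  -- assemble
  have goal1 : (Δ.fNum d : ℤ) = (Δ₁.fNum d : ℤ) + (Δ₂.fNum d : ℤ) - 2 := by
    have := hcuniv
    omega
  have goal2 : ∀ S : Finset (Fin (d + 1)), S ≠ Finset.univ →
      (Δ.fS S : ℤ) = (Δ₁.fS S : ℤ) + (Δ₂.fS S : ℤ) - 1 := by
    intro S hS
    have := hcount S hS
    omega
  have hne : ∀ i j : Fin (d + 1), (Finset.univ \ {i, j} : Finset (Fin (d + 1))) ≠ Finset.univ := by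
    intro i j h
    have hi : i ∈ (Finset.univ \ {i, j} : Finset (Fin (d + 1))) := by
      rw [h]; exact Finset.mem_univ i
    simp at hi
  refine ⟨goal1, fun i j _ => goal2 _ (hne i j), fun ε => ?_⟩
  unfold BalancedComplex.rho
  have hfd : (Δ.fNum d : ℚ) = (Δ₁.fNum d : ℚ) + (Δ₂.fNum d : ℚ) - 2 := by
    exact_mod_cast goal1
  have hsum : ∑ i : Fin (d + 1), (Δ.fS (Finset.univ \ {ε i, ε (i + 1)}) : ℚ) =
      (∑ i : Fin (d + 1), (Δ₁.fS (Finset.univ \ {ε i, ε (i + 1)}) : ℚ)) +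
      (∑ i : Fin (d + 1), (Δ₂.fS (Finset.univ \ {ε i, ε (i + 1)}) : ℚ)) - (d + 1) := by
    have : ∀ i : Fin (d + 1), (Δ.fS (Finset.univ \ {ε i, ε (i + 1)}) : ℚ) =
        (Δ₁.fS (Finset.univ \ {ε i, ε (i + 1)}) : ℚ) +
        (Δ₂.fS (Finset.univ \ {ε i, ε (i + 1)}) : ℚ) - 1 := by
      intro i
      exact_mod_cast goal2 _ (hne (ε i) (ε (i + 1)))
    rw [Finset.sum_congr rfl fun i _ => this i, Finset.sum_sub_distrib,
      Finset.sum_add_distrib]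
    simp [Finset.card_univ]
  rw [hfd, hsum]
  ring
end

section
/- Let Δ be a connected simplicial complex, let T be a spanning tree of the 1-skeleton G(Δ), and let e be an edge of G(Δ) not in T such that the unique cycle C_e in T ∪ {e} is contained in the link of some vertex of Δ. Then [C_e]_T = 1 in the group G_T. -/
/-- The vertex set of a complex, as a subtype of `ℕ`. -/
abbrev SComplex.Vert (Δ : SComplex) : Type := {v : ℕ // ({v} : Finset ℕ) ∈ Δ.faces}

/-- The 1-skeleton `G(Δ)` as a simple graph on the vertex set of `Δ`. -/
def SComplex.vgraph (Δ : SComplex) : SimpleGraph Δ.Vert where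
  Adj u v := u ≠ v ∧ ({u.1, v.1} : Finset ℕ) ∈ Δ.faces
  symm := by
    constructor
    rintro u v ⟨h1, h2⟩
    exact ⟨h1.symm, by rwa [Finset.pair_comm]⟩
  loopless := ⟨fun v h => h.1 rfl⟩

/-- The relations defining the group `G_T`: `(v,v') = 1` whenever `{v,v'}` is an edge
of the spanning tree `T`, and `(v₁,v₂)(v₂,v₃) = (v₁,v₃)` whenever `{v₁,v₂,v₃}` is
contained in a face of `Δ`. -/
def SComplex.treeRels (Δ : SComplex) (T : SimpleGraph Δ.Vert) :
    Set (FreeGroup (Δ.Vert × Δ.Vert)) :=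
  {w | ∃ u v : Δ.Vert, T.Adj u v ∧ w = FreeGroup.of (u, v)} ∪
  {w | ∃ u v x : Δ.Vert, ({u.1, v.1, x.1} : Finset ℕ) ∈ Δ.faces ∧
    w = FreeGroup.of (u, v) * FreeGroup.of (v, x) * (FreeGroup.of (u, x))⁻¹}

/-- The group `G_T`. -/
def SComplex.GT (Δ : SComplex) (T : SimpleGraph Δ.Vert) : Type :=
  PresentedGroup (Δ.treeRels T)

instance (Δ : SComplex) (T : SimpleGraph Δ.Vert) : Group (Δ.GT T) :=
  inferInstanceAs (Group (PresentedGroup (Δ.treeRels T)))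

/-- The word in the free group on ordered pairs of vertices associated to a walk. -/
def SComplex.walkWord {Δ : SComplex} {a b : Δ.Vert} (p : Δ.vgraph.Walk a b) :
    FreeGroup (Δ.Vert × Δ.Vert) :=
  (p.darts.map fun dt => FreeGroup.of (dt.toProd.1, dt.toProd.2)).prod

/-- The class `[C]_T ∈ G_T` of a closed walk `C`. -/
def SComplex.walkClass (Δ : SComplex) (T : SimpleGraph Δ.Vert) {a b : Δ.Vert}
    (p : Δ.vgraph.Walk a b) : Δ.GT T :=
  PresentedGroup.mk (Δ.treeRels T) (SComplex.walkWord p)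


section Aux

variable (Δ : SComplex) (T : SimpleGraph Δ.Vert)

private lemma mk_rel_one {r : FreeGroup (Δ.Vert × Δ.Vert)} (hr : r ∈ Δ.treeRels T) :
    PresentedGroup.mk (Δ.treeRels T) r = 1 :=
  (QuotientGroup.eq_one_iff r).2 (Subgroup.subset_normalClosure hr)

private lemma mk_tri {x y z : Δ.Vert} (h : ({x.1, y.1, z.1} : Finset ℕ) ∈ Δ.faces) :
    PresentedGroup.mk (Δ.treeRels T) (FreeGroup.of (x, y)) *
      PresentedGroup.mk (Δ.treeRels T) (FreeGroup.of (y, z)) =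
      PresentedGroup.mk (Δ.treeRels T) (FreeGroup.of (x, z)) := by
  have hr : FreeGroup.of (x, y) * FreeGroup.of (y, z) * (FreeGroup.of (x, z))⁻¹
      ∈ Δ.treeRels T := Or.inr ⟨x, y, z, h, rfl⟩
  have h1 := mk_rel_one Δ T hr
  rw [map_mul, map_mul, map_inv, mul_inv_eq_one] at h1
  exact h1

private lemma mk_diag {x : Δ.Vert} (h : ({x.1} : Finset ℕ) ∈ Δ.faces) :
    PresentedGroup.mk (Δ.treeRels T) (FreeGroup.of (x, x)) = 1 := by
  have h3 : ({x.1, x.1, x.1} : Finset ℕ) ∈ Δ.faces := by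
    simpa using h
  have := mk_tri Δ T h3
  exact (mul_eq_left.mp this)

private lemma mk_swap {x y : Δ.Vert} (h : ({x.1, y.1} : Finset ℕ) ∈ Δ.faces) :
    PresentedGroup.mk (Δ.treeRels T) (FreeGroup.of (y, x)) =
      (PresentedGroup.mk (Δ.treeRels T) (FreeGroup.of (x, y)))⁻¹ := by
  have h3 : ({x.1, y.1, x.1} : Finset ℕ) ∈ Δ.faces := by
    have : ({x.1, y.1, x.1} : Finset ℕ) = {x.1, y.1} := by
      ext t; simp; tauto
    rwa [this]
  have hx : ({x.1} : Finset ℕ) ∈ Δ.faces :=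
    Δ.down_closed _ h _ (by intro t ht; simp at ht; simp [ht])
  have htri := mk_tri Δ T h3
  rw [mk_diag Δ T hx] at htri
  exact eq_inv_of_mul_eq_one_right htri

private lemma walk_key (u : Δ.Vert) {a b : Δ.Vert} (p : Δ.vgraph.Walk a b)
    (hp : ∀ dt ∈ p.darts, ({dt.toProd.1.1, dt.toProd.2.1, u.1} : Finset ℕ) ∈ Δ.faces) :
    PresentedGroup.mk (Δ.treeRels T) (SComplex.walkWord p) =
      PresentedGroup.mk (Δ.treeRels T) (FreeGroup.of (a, u)) *
        (PresentedGroup.mk (Δ.treeRels T) (FreeGroup.of (b, u)))⁻¹ := by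
  induction p with
  | nil => simp [SComplex.walkWord]
  | @cons a c b h q ih =>
    have hd : ({a.1, c.1, u.1} : Finset ℕ) ∈ Δ.faces := by
      have := hp ⟨(a, c), h⟩ (by simp [SimpleGraph.Walk.darts_cons])
      simpa using this
    have hrest : ∀ dt ∈ q.darts,
        ({dt.toProd.1.1, dt.toProd.2.1, u.1} : Finset ℕ) ∈ Δ.faces := by
      intro dt hdt
      exact hp dt (by simp [SimpleGraph.Walk.darts_cons, hdt])
    have hword : SComplex.walkWord (SimpleGraph.Walk.cons h q) =
        FreeGroup.of (a, c) * SComplex.walkWord q := by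
      simp [SComplex.walkWord, SimpleGraph.Walk.darts_cons]
    -- face {a, u, c}
    have hauc : ({a.1, u.1, c.1} : Finset ℕ) ∈ Δ.faces := by
      have : ({a.1, u.1, c.1} : Finset ℕ) = {a.1, c.1, u.1} := by
        ext t; simp; tauto
      rwa [this]
    have hcu : ({c.1, u.1} : Finset ℕ) ∈ Δ.faces :=
      Δ.down_closed _ hd _ (by intro t ht; simp at ht; simp; tauto)
    have h1 := mk_tri Δ T hauc
    have h2 := mk_swap Δ T hcu
    rw [hword, map_mul, ih hrest, ← h1, h2]
    group

end Aux

/-- Let `Δ` be a connected simplicial complex, `T` a spanning tree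
of the 1-skeleton `G(Δ)`, and `e = {a,b}` an edge of `G(Δ)` not in `T` such that the
unique cycle `C_e` of `T ∪ {e}` is contained in the link of some vertex `u` of `Δ`.
Then `[C_e]_T = 1` in `G_T`.  (Any cycle of `T ∪ {e}` is the unique one, so we
quantify over all cycles `C` all of whose edges lie in `T ∪ {e}`.) -/
theorem statement11 (Δ : SComplex) (hconn : Δ.Conn)
    (T : SimpleGraph Δ.Vert) (hle : T ≤ Δ.vgraph) (htree : T.IsTree)
    (a b : Δ.Vert) (he : Δ.vgraph.Adj a b) (heT : ¬ T.Adj a b)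
    (v : Δ.Vert) (C : Δ.vgraph.Walk v v) (hC : C.IsCycle)
    (hCsub : ∀ dt ∈ C.darts, T.Adj dt.toProd.1 dt.toProd.2 ∨
      (dt.toProd.1 = a ∧ dt.toProd.2 = b) ∨ (dt.toProd.1 = b ∧ dt.toProd.2 = a))
    (hCe : ∃ dt ∈ C.darts,
      (dt.toProd.1 = a ∧ dt.toProd.2 = b) ∨ (dt.toProd.1 = b ∧ dt.toProd.2 = a))
    (u : ℕ)
    (hlink : ∀ dt ∈ C.darts,
      ({dt.toProd.1.1, dt.toProd.2.1} : Finset ℕ) ∈ (Δ.lk {u}).faces) :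
    Δ.walkClass T C = 1 := by
  classical
  obtain ⟨dt0, hdt0, -⟩ := hCe
  have h0 := hlink dt0 hdt0
  rw [SComplex.lk, Finset.mem_filter] at h0
  have hu : ({u} : Finset ℕ) ∈ Δ.faces :=
    Δ.down_closed _ h0.2.2 _ (by intro t ht; simp at ht; simp [ht])
  set uv : Δ.Vert := ⟨u, hu⟩ with huv
  have hp : ∀ dt ∈ C.darts,
      ({dt.toProd.1.1, dt.toProd.2.1, uv.1} : Finset ℕ) ∈ Δ.faces := by
    intro dt hdt
    have h1 := hlink dt hdt
    rw [SComplex.lk, Finset.mem_filter] at h1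
    have heq : ({dt.toProd.1.1, dt.toProd.2.1, uv.1} : Finset ℕ) =
        ({dt.toProd.1.1, dt.toProd.2.1} : Finset ℕ) ∪ {u} := by
      ext t; simp [huv]
    rw [heq]
    exact h1.2.2
  have := walk_key Δ T uv C hp
  rw [SComplex.walkClass, this, mul_inv_cancel]
  rfl
end

section
/- Let Δ be a balanced normal d-pseudomanifold and let S ⊆ [d] with |S| = r ≥ 2. Then the rank-selected subcomplex Δ_S is strongly connected: for any two (r−1)-dimensional faces σ and τ of Δ_S, there exists a sequence σ = σ₁, σ₂, …, σ_m = τ of (r−1)-dimensional faces of Δ_S such that σ_i ∩ σ_{i+1} is an (r−2)-dimensional face of Δ_S for each 1 ≤ i ≤ m−1. -/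
lemma SComplex.exists_facet (Δ : SComplex) {σ : Finset ℕ} (hσ : σ ∈ Δ.faces) :
    ∃ F ∈ Δ.facets, σ ⊆ F := by
  obtain ⟨F, hF, hmax⟩ := Finset.exists_max_image (Δ.faces.filter (σ ⊆ ·)) Finset.card
    ⟨σ, by simp [hσ]⟩
  rw [Finset.mem_filter] at hF
  refine ⟨F, ?_, hF.2⟩
  rw [SComplex.facets, Finset.mem_filter]
  refine ⟨hF.1, fun τ hτ hFτ => ?_⟩
  exact Finset.eq_of_subset_of_card_le hFτ
    (hmax τ (Finset.mem_filter.2 ⟨hτ, hF.2.trans hFτ⟩))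

/-- Let `Δ` be a balanced normal `d`-pseudomanifold and `S ⊆ [d]`
with `|S| = r ≥ 2`.  Then the rank-selected subcomplex `Δ_S` is strongly connected:
any two `(r-1)`-dimensional faces of `Δ_S` are joined by a sequence of
`(r-1)`-dimensional faces of `Δ_S` in which consecutive members intersect in an
`(r-2)`-dimensional face of `Δ_S`. -/
theorem statement12 (d : ℕ) (Δ : BalancedComplex d)
    (hΔ : Δ.toSComplex.IsNormalPseudomanifold d)
    (S : Finset (Fin (d + 1))) (r : ℕ) (hr : 2 ≤ r) (hS : S.card = r)
    (σ τ : Finset ℕ)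
    (hσ : σ ∈ (Δ.restrict S).faces) (hσc : σ.card = r)
    (hτ : τ ∈ (Δ.restrict S).faces) (hτc : τ.card = r) :
    Relation.ReflTransGen
      (fun α β => α ∈ (Δ.restrict S).faces ∧ α.card = r ∧
        β ∈ (Δ.restrict S).faces ∧ β.card = r ∧ (α ∩ β).card = r - 1) σ τ := by

  classical
  -- `m F` is the `S`-restriction of `F`
  set m : Finset ℕ → Finset ℕ := fun F => F.filter (fun v => Δ.κ v ∈ S) with hm
  have hfacet_faces : ∀ F ∈ Δ.toSComplex.facets, F ∈ Δ.faces := by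
    intro F hF
    exact (Finset.mem_filter.1 hF).1
  have hpure := hΔ.2.1
  have hinj : ∀ F ∈ Δ.faces, Set.InjOn Δ.κ F := by
    intro F hF u hu v hv huv
    exact Δ.proper F hF u hu v hv huv
  have mcard : ∀ F ∈ Δ.toSComplex.facets, (m F).card = r := by
    intro F hF
    have hFf := hfacet_faces F hF
    have hinjF := hinj F hFf
    have himg : F.image Δ.κ = Finset.univ := by
      apply Finset.eq_univ_of_card
      rw [Finset.card_image_of_injOn hinjF, hpure F hF, Fintype.card_fin]
    have h1 : (m F).image Δ.κ = S := by
      ext c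
      simp only [hm, Finset.mem_image, Finset.mem_filter]
      constructor
      · rintro ⟨v, ⟨hv, hvS⟩, rfl⟩; exact hvS
      · intro hc
        have : c ∈ F.image Δ.κ := himg ▸ Finset.mem_univ c
        obtain ⟨v, hv, rfl⟩ := Finset.mem_image.1 this
        exact ⟨v, ⟨hv, hc⟩, rfl⟩
    have hinjm : Set.InjOn Δ.κ (m F) := fun u hu v hv h =>
      hinjF (Finset.filter_subset _ _ (by exact hu))
        (Finset.filter_subset _ _ (by exact hv)) h
    rw [← Finset.card_image_of_injOn hinjm, h1, hS]
  have mface : ∀ F ∈ Δ.toSComplex.facets, m F ∈ (Δ.restrict S).faces := by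
    intro F hF
    rw [BalancedComplex.restrict, Finset.mem_filter]
    refine ⟨Δ.down_closed F (hfacet_faces F hF) _ (Finset.filter_subset _ _), ?_⟩
    intro c hc
    obtain ⟨v, hv, rfl⟩ := Finset.mem_image.1 hc
    exact (Finset.mem_filter.1 hv).2
  have msel : ∀ γ ∈ (Δ.restrict S).faces, γ.card = r →
      ∀ F ∈ Δ.toSComplex.facets, γ ⊆ F → γ = m F := by
    intro γ hγ hγc F hF hγF
    simp only [BalancedComplex.restrict, Finset.mem_filter] at hγ
    have hsub : γ ⊆ m F := by
      intro v hv
      rw [hm, Finset.mem_filter]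
      exact ⟨hγF hv, hγ.2 (Finset.mem_image_of_mem _ hv)⟩
    exact Finset.eq_of_subset_of_card_le hsub (by rw [mcard F hF, hγc])
  set R : Finset ℕ → Finset ℕ → Prop := fun α β =>
    α ∈ (Δ.restrict S).faces ∧ α.card = r ∧
      β ∈ (Δ.restrict S).faces ∧ β.card = r ∧ (α ∩ β).card = r - 1 with hR
  have step : ∀ F ∈ Δ.toSComplex.facets, ∀ G ∈ Δ.toSComplex.facets,
      (F ∩ G).card = d → Relation.ReflTransGen R (m F) (m G) := by
    intro F hF G hG hFG
    have hFd : (F \ G).card = 1 := by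
      have := Finset.card_sdiff_add_card_inter F G
      rw [hFG, hpure F hF] at this
      omega
    have hmsd : m F \ m G ⊆ F \ G := by
      intro v hv
      rw [Finset.mem_sdiff] at hv ⊢
      rw [hm] at hv
      simp only [Finset.mem_filter] at hv
      exact ⟨hv.1.1, fun hvG => hv.2 ⟨hvG, hv.1.2⟩⟩
    have hk1 : (m F \ m G).card ≤ 1 := hFd ▸ Finset.card_le_card hmsd
    have hkeq := Finset.card_sdiff_add_card_inter (m F) (m G)
    rw [mcard F hF] at hkeq
    have hkub : (m F ∩ m G).card ≤ r := by
      rw [← mcard F hF]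
      exact Finset.card_le_card Finset.inter_subset_left
    by_cases hcase : (m F ∩ m G).card = r
    · have h1 : m F ∩ m G = m F :=
        Finset.eq_of_subset_of_card_le Finset.inter_subset_left
          (by rw [hcase, mcard F hF])
      have h2 : m F ⊆ m G := by rw [← h1]; exact Finset.inter_subset_right
      have : m F = m G := Finset.eq_of_subset_of_card_le h2
        (by rw [mcard F hF, mcard G hG])
      rw [this]
    · exact Relation.ReflTransGen.single
        ⟨mface F hF, mcard F hF, mface G hG, mcard G hG, by omega⟩
  have hσF : σ ∈ Δ.faces := (Finset.mem_filter.1 hσ).1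
  have hτF : τ ∈ Δ.faces := (Finset.mem_filter.1 hτ).1
  obtain ⟨F, hF, hσsub⟩ := Δ.toSComplex.exists_facet hσF
  obtain ⟨G, hG, hτsub⟩ := Δ.toSComplex.exists_facet hτF
  rw [msel σ hσ hσc F hF hσsub, msel τ hτ hτc G hG hτsub]
  have hpath := hΔ.2.2.2.1 F hF G hG
  clear hσsub hτsub hσ hτ hσc hτc hσF hτF
  induction hpath with
  | refl => exact Relation.ReflTransGen.refl
  | tail hab hbc ih =>
    exact (ih hbc.1).trans (step _ hbc.1 _ hbc.2.1 hbc.2.2)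
end

section
/- Let Δ be a balanced normal d-pseudomanifold and let S be a two-element subset of [d]. Then the graph Δ_S contains no almost-induced cycle, i.e., no cycle C in Δ_S having exactly one vertex c with deg(c, Δ_S) > 2 while every other vertex v of C satisfies deg(v, Δ_S) = 2. -/
/-! ### Auxiliary lemmas -/


open SimpleGraph

section WalkAux
variable {V : Type*} {G : SimpleGraph V}

lemma aux_walk_edges_iff {a b : V} (p : G.Walk a b) (e : Sym2 V) :
    e ∈ p.edges ↔ ∃ i, i < p.length ∧ e = s(p.getVert i, p.getVert (i+1)) := by
  induction p with
  | nil => simp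
  | @cons u v w h q ih =>
    rw [Walk.edges_cons, List.mem_cons, ih]
    constructor
    · rintro (rfl | ⟨i, hi, rfl⟩)
      · exact ⟨0, by simp, by simp [Walk.getVert_zero, Walk.getVert_cons_succ]⟩
      · exact ⟨i+1, by simp [hi], by simp [Walk.getVert_cons_succ]⟩
    · rintro ⟨i, hi, rfl⟩
      cases i with
      | zero => left; simp [Walk.getVert_zero, Walk.getVert_cons_succ]
      | succ i =>
        right
        exact ⟨i, by simpa using hi, by simp [Walk.getVert_cons_succ]⟩

lemma aux_getVert_mem_support {a b : V} (p : G.Walk a b) (i : ℕ) :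
    p.getVert i ∈ p.support := by
  induction p generalizing i with
  | nil => simp [Walk.getVert]
  | @cons u v w h q ih =>
    cases i with
    | zero => simp [Walk.getVert_zero]
    | succ i => rw [Walk.getVert_cons_succ]; simp [ih i]

lemma aux_support_getD {a b : V} (p : G.Walk a b) (i : ℕ) :
    p.support.getD i b = p.getVert i := by
  induction p generalizing i with
  | nil => cases i <;> simp [Walk.getVert]
  | @cons u v w h q ih =>
    cases i with
    | zero => simp [Walk.getVert_zero]
    | succ i => rw [Walk.getVert_cons_succ, Walk.support_cons]; simpa using ih i

end WalkAux

section SCAux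

open Finset

/-- Every face is contained in a facet. -/
lemma aux_exists_facet (Δ : SComplex) {σ : Finset ℕ} (h : σ ∈ Δ.faces) :
    ∃ F ∈ Δ.facets, σ ⊆ F := by
  classical
  obtain ⟨F, hF, hmax⟩ := Finset.exists_max_image (Δ.faces.filter fun τ => σ ⊆ τ)
      Finset.card ⟨σ, by simp [h]⟩
  rw [Finset.mem_filter] at hF
  refine ⟨F, ?_, hF.2⟩
  rw [SComplex.facets, Finset.mem_filter]
  refine ⟨hF.1, fun τ hτ hsub => ?_⟩
  have hτ' : τ ∈ Δ.faces.filter fun τ => σ ⊆ τ := by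
    rw [Finset.mem_filter]; exact ⟨hτ, hF.2.trans hsub⟩
  exact Finset.eq_of_subset_of_card_le hsub (hmax τ hτ')

lemma aux_facet_mem_faces {Δ : SComplex} {F : Finset ℕ} (h : F ∈ Δ.facets) : F ∈ Δ.faces :=
  (Finset.mem_filter.1 h).1

lemma aux_facet_of_card {Δ : SComplex} {d : ℕ} (hpure : Δ.Pure d) {σ : Finset ℕ}
    (h : σ ∈ Δ.faces) (hc : σ.card = d + 1) : σ ∈ Δ.facets := by
  obtain ⟨F, hF, hsub⟩ := aux_exists_facet Δ h
  have : σ = F := Finset.eq_of_subset_of_card_le hsub (by rw [hpure F hF, hc])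
  exact this ▸ hF

/-- The neighbours of a vertex in (the graph of) a complex, as a finset. -/
noncomputable def aux_NB (Γ : SComplex) (x : ℕ) : Finset ℕ := by
  classical
  exact (Γ.faces.biUnion id).filter (fun z => x ≠ z ∧ (insert x {z} : Finset ℕ) ∈ Γ.faces)

lemma aux_mem_NB {Γ : SComplex} {x z : ℕ} : z ∈ aux_NB Γ x ↔ Γ.graph.Adj x z := by
  classical
  simp only [aux_NB, Finset.mem_filter, Finset.mem_biUnion, id]
  constructor
  · rintro ⟨-, h⟩; exact h
  · rintro ⟨h1, h2⟩
    exact ⟨⟨insert x {z}, h2, by simp⟩, h1, h2⟩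

lemma aux_deg_NB (Γ : SComplex) (x : ℕ) : Γ.deg {x} = (aux_NB Γ x).card := by
  classical
  rw [SComplex.deg, SComplex.vertCount]
  have key : (aux_NB Γ x).card
      = (((Γ.lk {x}).faces).filter (fun σ => σ.card = 1)).card := by
    refine Finset.card_bij (fun z _ => ({z} : Finset ℕ)) ?_ ?_ ?_
    · intro z hz
      rw [aux_mem_NB] at hz
      obtain ⟨hne, hmem⟩ := hz
      have hz1 : ({z} : Finset ℕ) ∈ Γ.faces :=
        Γ.down_closed _ hmem {z} (by intro t ht; simp at ht; simp [ht])
      rw [Finset.mem_filter]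
      refine ⟨?_, by simp⟩
      rw [SComplex.lk, Finset.mem_filter]
      refine ⟨hz1, ?_, ?_⟩
      · apply Finset.singleton_inter_of_notMem
        simp [Ne.symm hne]
      · have : ({z} : Finset ℕ) ∪ {x} = insert x {z} := by
          ext t; simp; tauto
        rw [this]; exact hmem
    · intro a ha b hb hab
      simpa using hab
    · intro γ hγ
      rw [Finset.mem_filter] at hγ
      obtain ⟨hγ1, hγc⟩ := hγ
      obtain ⟨z, rfl⟩ := Finset.card_eq_one.1 hγc
      rw [SComplex.lk, Finset.mem_filter] at hγ1
      obtain ⟨hzf, hdisj, hun⟩ := hγ1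
      have hne : x ≠ z := by
        intro h; subst h
        simp at hdisj
      refine ⟨z, ?_, rfl⟩
      rw [aux_mem_NB]
      refine ⟨hne, ?_⟩
      have : ({z} : Finset ℕ) ∪ {x} = insert x {z} := by
        ext t; simp; tauto
      rw [← this]; exact hun
  exact key.symm

end SCAux


/-- Exactly-two-ness of the facets over a ridge, in usable form. -/
lemma aux_ridge_two {Δ : SComplex} {d : ℕ} (hΔ : Δ.IsNormalPseudomanifold d)
    {σ : Finset ℕ} (hσ : σ ∈ Δ.faces) (hc : σ.card = d) :
    ∃ z1 z2, z1 ≠ z2 ∧ (z1 ∉ σ ∧ insert z1 σ ∈ Δ.faces) ∧ (z2 ∉ σ ∧ insert z2 σ ∈ Δ.faces) ∧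
      ∀ z, z ∉ σ → insert z σ ∈ Δ.faces → z = z1 ∨ z = z2 := by
  classical
  obtain ⟨-, hpure, hridge, -, -⟩ := hΔ
  have h2 := hridge σ hσ hc
  obtain ⟨F1, F2, hF12, hset⟩ := Finset.card_eq_two.1 h2
  have hF1 : F1 ∈ Δ.facets ∧ σ ⊆ F1 := by
    have : F1 ∈ Δ.facets.filter fun τ => σ ⊆ τ := by rw [hset]; simp
    exact Finset.mem_filter.1 this
  have hF2 : F2 ∈ Δ.facets ∧ σ ⊆ F2 := by
    have : F2 ∈ Δ.facets.filter fun τ => σ ⊆ τ := by rw [hset]; simp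
    exact Finset.mem_filter.1 this
  have extract : ∀ F, F ∈ Δ.facets → σ ⊆ F → ∃ z, z ∉ σ ∧ F = insert z σ := by
    intro F hF hsub
    have hcard : (F \ σ).card = 1 := by
      rw [Finset.card_sdiff_of_subset hsub, hpure F hF, hc]; omega
    obtain ⟨z, hz⟩ := Finset.card_eq_one.1 hcard
    have hzmem : z ∈ F \ σ := by rw [hz]; simp
    rw [Finset.mem_sdiff] at hzmem
    refine ⟨z, hzmem.2, ?_⟩
    have : F = (F \ σ) ∪ σ := by
      rw [Finset.sdiff_union_self_eq_union, Finset.union_eq_left.2 hsub]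
    rw [this, hz]; ext t; simp
  obtain ⟨z1, hz1, hFz1⟩ := extract F1 hF1.1 hF1.2
  obtain ⟨z2, hz2, hFz2⟩ := extract F2 hF2.1 hF2.2
  have hz12 : z1 ≠ z2 := by
    intro h; subst h; exact hF12 (hFz1 ▸ hFz2 ▸ rfl)
  refine ⟨z1, z2, hz12, ⟨hz1, hFz1 ▸ aux_facet_mem_faces hF1.1⟩,
    ⟨hz2, hFz2 ▸ aux_facet_mem_faces hF2.1⟩, ?_⟩
  intro z hz hzf
  have hcard : (insert z σ).card = d + 1 := by rw [Finset.card_insert_of_notMem hz, hc]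
  have hfacet : insert z σ ∈ Δ.facets := aux_facet_of_card hpure hzf hcard
  have : insert z σ ∈ Δ.facets.filter fun τ => σ ⊆ τ := by
    rw [Finset.mem_filter]
    exact ⟨hfacet, Finset.subset_insert _ _⟩
  rw [hset] at this
  simp only [Finset.mem_insert, Finset.mem_singleton] at this
  rcases this with h | h
  · left
    have : z ∈ insert z1 σ := hFz1 ▸ h ▸ Finset.mem_insert_self z σ
    simp at this; tauto
  · right
    have : z ∈ insert z2 σ := hFz2 ▸ h ▸ Finset.mem_insert_self z σ
    simp at this; tauto

section BCAux
variable {d : ℕ} (Δ : BalancedComplex d) (S : Finset (Fin (d+1)))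

lemma aux_adj_mem_faces {a b : ℕ} (h : (Δ.restrict S).graph.Adj a b) :
    (insert a {b} : Finset ℕ) ∈ Δ.faces ∧ Δ.κ a ∈ S ∧ Δ.κ b ∈ S ∧ Δ.κ a ≠ Δ.κ b := by
  obtain ⟨hne, hmem⟩ := h
  rw [BalancedComplex.restrict] at hmem
  simp only [Finset.mem_filter] at hmem
  obtain ⟨hf, himg⟩ := hmem
  refine ⟨hf, himg (by simp), himg (by simp), ?_⟩
  intro hk
  exact hne (Δ.proper _ hf a (by simp) b (by simp) hk)

lemma aux_edge_of_face {τ0 : Finset ℕ} (hcol : τ0.image Δ.κ = Finset.univ \ S)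
    {p q : ℕ} (hp : p ∉ τ0) (hq : q ∉ τ0) (hne : p ≠ q)
    (hf : insert p (insert q τ0) ∈ Δ.faces) : (Δ.restrict S).graph.Adj p q := by
  have hcolS : ∀ a, a ∉ τ0 → a ∈ insert p (insert q τ0) → Δ.κ a ∈ S := by
    intro a ha hamem
    by_contra hnotS
    have : Δ.κ a ∈ τ0.image Δ.κ := by rw [hcol]; simp [hnotS]
    obtain ⟨t, ht, htk⟩ := Finset.mem_image.1 this
    have : t = a := Δ.proper _ hf t (by simp [ht]) a hamem htk
    exact ha (this ▸ ht)
  have hpq : (insert p ({q} : Finset ℕ)) ∈ Δ.faces :=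
    Δ.down_closed _ hf _ (by intro t ht; simp at ht; rcases ht with h|h <;> simp [h])
  refine ⟨hne, ?_⟩
  rw [BalancedComplex.restrict]
  simp only [Finset.mem_filter]
  refine ⟨hpq, ?_⟩
  intro k hk
  simp only [Finset.mem_image] at hk
  obtain ⟨t, ht, rfl⟩ := hk
  simp only [Finset.mem_insert, Finset.mem_singleton] at ht
  rcases ht with rfl | rfl
  · exact hcolS t hp (by simp)
  · exact hcolS t hq (by simp)

end BCAux


/-- Let `Δ` be a balanced normal `d`-pseudomanifold and `S ⊆ [d]`
a two-element subset.  Then the graph `Δ_S` contains no almost-induced cycle: there is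
no cycle `C` in `Δ_S` having exactly one vertex `c` with `deg(c,Δ_S) > 2` while every
other vertex `x` of `C` satisfies `deg(x,Δ_S) = 2`. -/
theorem statement16 (d : ℕ) (Δ : BalancedComplex d)
    (hΔ : Δ.toSComplex.IsNormalPseudomanifold d)
    (S : Finset (Fin (d + 1))) (hS : S.card = 2) :
    ¬ ∃ (v : ℕ) (C : (Δ.restrict S).graph.Walk v v), C.IsCycle ∧
      ∃ c ∈ C.support, 2 < (Δ.restrict S).deg {c} ∧
        ∀ x ∈ C.support, x ≠ c → (Δ.restrict S).deg {x} = 2 := by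
  classical
  rintro ⟨v, C, hC, c, hcmem, hcdeg, hdeg2⟩
  have hd : 1 ≤ d := by
    have h1 := Finset.card_le_univ S
    rw [hS] at h1
    simp only [Finset.card_univ, Fintype.card_fin] at h1
    omega
  obtain ⟨-, hpure, -, hfconn, -⟩ := id hΔ
  set C₀ := C.rotate c hcmem with hC₀def
  have hC₀ : C₀.IsCycle := hC.rotate hcmem
  have hn3 : 3 ≤ C₀.length := hC₀.three_le_length
  have hx0 : C₀.getVert 0 = c := C₀.getVert_zero
  have hxn : C₀.getVert C₀.length = c := C₀.getVert_length
  have hsupp : ∀ y, y ∈ C₀.support → y ∈ C.support := by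
    intro y hy
    rw [SimpleGraph.Walk.support_eq_cons] at hy
    rcases List.mem_cons.1 hy with rfl | hy'
    · exact hcmem
    · have hrot := SimpleGraph.Walk.support_rotate C c hcmem
      have : y ∈ C.support.tail := (hrot.mem_iff).1 hy'
      exact List.mem_of_mem_tail this
  have htail : C₀.support.tail.Nodup := hC₀.support_nodup
  have hinj : ∀ i j, 1 ≤ i → i ≤ C₀.length → 1 ≤ j → j ≤ C₀.length →
      C₀.getVert i = C₀.getVert j → i = j := by
    intro i j hi1 hin hj1 hjn he
    have hlen : C₀.support.tail.length = C₀.length := by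
      have h := SimpleGraph.Walk.length_support C₀
      have h2 : C₀.support.tail.length = C₀.support.length - 1 := by
        simp [List.length_tail]
      omega
    have hget : ∀ k, 1 ≤ k → k ≤ C₀.length →
        C₀.support.tail.getD (k-1) c = C₀.getVert k := by
      intro k hk1 hk2
      have h1 := aux_support_getD C₀ k
      rw [SimpleGraph.Walk.support_eq_cons] at h1
      rw [← h1]
      cases k with
      | zero => omega
      | succ m => simp
    have e1 := hget i hi1 hin
    have e2 := hget j hj1 hjn
    have hi' : i - 1 < C₀.support.tail.length := by omega
    have hj' : j - 1 < C₀.support.tail.length := by omega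
    rw [List.getD_eq_getElem _ _ hi'] at e1
    rw [List.getD_eq_getElem _ _ hj'] at e2
    have heq : C₀.support.tail[i-1] = C₀.support.tail[j-1] := by rw [e1, e2, he]
    have := (List.Nodup.getElem_inj_iff htail).1 heq
    omega
  have hne_c : ∀ i, 1 ≤ i → i ≤ C₀.length - 1 → C₀.getVert i ≠ c := by
    intro i h1 h2 he
    have := hinj i C₀.length h1 (by omega) (by omega) (le_refl _)
      (by rw [he, hxn])
    omega
  have hadj : ∀ i, i < C₀.length →
      (Δ.restrict S).graph.Adj (C₀.getVert i) (C₀.getVert (i+1)) :=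
    fun i hi => C₀.adj_getVert_succ hi
  have hedge : ∀ i, i < C₀.length → s(C₀.getVert i, C₀.getVert (i+1)) ∈ C₀.edges :=
    fun i hi => (aux_walk_edges_iff C₀ _).2 ⟨i, hi, rfl⟩
  have hmem_edges : ∀ e ∈ C₀.edges,
      ∃ i, i < C₀.length ∧ e = s(C₀.getVert i, C₀.getVert (i+1)) :=
    fun e he => (aux_walk_edges_iff C₀ e).1 he
  have hNB2 : ∀ i, 1 ≤ i → i ≤ C₀.length - 1 →
      (aux_NB (Δ.restrict S) (C₀.getVert i)).card = 2 := by
    intro i h1 h2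
    rw [← aux_deg_NB]
    exact hdeg2 _ (hsupp _ (aux_getVert_mem_support C₀ i)) (hne_c i h1 h2)
  have hprev_ne : ∀ i, 1 ≤ i → i ≤ C₀.length - 1 →
      C₀.getVert (i-1) ≠ C₀.getVert (i+1) := by
    intro i h1 h2 he
    rcases Nat.lt_or_ge 1 i with hgt | hle
    · have := hinj (i-1) (i+1) (by omega) (by omega) (by omega) (by omega) he
      omega
    · have hi1 : i = 1 := by omega
      subst hi1
      rw [show (1:ℕ)-1 = 0 from rfl, hx0] at he
      have h3 : C₀.getVert C₀.length = C₀.getVert (1+1) := hxn.trans he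
      have := hinj C₀.length (1+1) (by omega) (le_refl _) (by omega) (by omega) h3
      omega
  have hcover : ∀ i, 1 ≤ i → i ≤ C₀.length - 1 → ∀ z,
      (Δ.restrict S).graph.Adj (C₀.getVert i) z →
      z = C₀.getVert (i-1) ∨ z = C₀.getVert (i+1) := by
    intro i h1 h2 z hz
    have hm1 : C₀.getVert (i-1) ∈ aux_NB (Δ.restrict S) (C₀.getVert i) := by
      rw [aux_mem_NB]
      have heq : (i-1) + 1 = i := by omega
      have h := hadj (i-1) (by omega)
      rw [heq] at h
      exact h.symm
    have hm2 : C₀.getVert (i+1) ∈ aux_NB (Δ.restrict S) (C₀.getVert i) := by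
      rw [aux_mem_NB]; exact hadj i (by omega)
    have hmz : z ∈ aux_NB (Δ.restrict S) (C₀.getVert i) := by
      rw [aux_mem_NB]; exact hz
    have hsubset : aux_NB (Δ.restrict S) (C₀.getVert i)
        = {C₀.getVert (i-1), C₀.getVert (i+1)} := by
      apply (Finset.eq_of_subset_of_card_le ?_ ?_).symm
      · intro t ht
        simp only [Finset.mem_insert, Finset.mem_singleton] at ht
        rcases ht with rfl | rfl
        exacts [hm1, hm2]
      · rw [hNB2 i h1 h2, Finset.card_insert_of_notMem (by
          simp [hprev_ne i h1 h2]), Finset.card_singleton]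
    rw [hsubset] at hmz
    simpa using hmz
  -- The core propagation lemma.
  have hCORE : ∀ τ0 : Finset ℕ, τ0.card + 1 = d →
      τ0.image Δ.κ = Finset.univ \ S →
      ∀ p q r : ℕ, p ∉ τ0 → q ∉ τ0 → r ∉ τ0 → p ≠ q → p ≠ r →
      insert p (insert q τ0) ∈ Δ.faces → insert p (insert r τ0) ∈ Δ.faces →
      s(p, q) ∈ C₀.edges → s(p, r) ∈ C₀.edges := by
    intro τ0 hτc hτcol p q r hp hq hr hpq hpr hfq hfr hHpq
    have hτnot : ∀ a, Δ.κ a ∈ S → a ∉ τ0 := by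
      intro a ha hmem
      have h1 : Δ.κ a ∈ τ0.image Δ.κ := Finset.mem_image_of_mem _ hmem
      rw [hτcol, Finset.mem_sdiff] at h1
      exact h1.2 ha
    have hstep : ∀ a b, a ∉ τ0 → b ∉ τ0 → a ≠ b → insert a (insert b τ0) ∈ Δ.faces →
        ∃ z, z ≠ b ∧ z ∉ τ0 ∧ z ≠ a ∧ insert a (insert z τ0) ∈ Δ.faces ∧
        ∀ y, y ∉ τ0 → y ≠ a → insert a (insert y τ0) ∈ Δ.faces → y = b ∨ y = z := by
      intro a b ha hb hab hf
      have hσ : insert a τ0 ∈ Δ.faces := Δ.down_closed _ hf _ (by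
        intro t ht
        simp only [Finset.mem_insert] at ht ⊢
        tauto)
      have hσc : (insert a τ0).card = d := by
        rw [Finset.card_insert_of_notMem ha]; omega
      obtain ⟨z1, z2, h12, ⟨hz1n, hz1f⟩, ⟨hz2n, hz2f⟩, hcov⟩ := aux_ridge_two hΔ hσ hσc
      have hnm : ∀ y, y ∉ τ0 → y ≠ a → y ∉ insert a τ0 := by
        intro y h1 h2
        simp [h1, h2]
      have hfc : ∀ y, insert y (insert a τ0) ∈ Δ.faces ↔
          insert a (insert y τ0) ∈ Δ.faces := by
        intro y; rw [Finset.insert_comm]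
      have hbmem : b = z1 ∨ b = z2 :=
        hcov b (hnm b hb (Ne.symm hab)) ((hfc b).2 hf)
      have hz1' : z1 ∉ τ0 ∧ z1 ≠ a := by
        constructor
        · intro h; exact hz1n (by simp [h])
        · intro h; exact hz1n (by simp [h])
      have hz2' : z2 ∉ τ0 ∧ z2 ≠ a := by
        constructor
        · intro h; exact hz2n (by simp [h])
        · intro h; exact hz2n (by simp [h])
      rcases hbmem with rfl | rfl
      · refine ⟨z2, Ne.symm h12, hz2'.1, hz2'.2, (hfc z2).1 hz2f, ?_⟩
        intro y h1 h2 h3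
        exact hcov y (hnm y h1 h2) ((hfc y).2 h3)
      · refine ⟨z1, h12, hz1'.1, hz1'.2, (hfc z1).1 hz1f, ?_⟩
        intro y h1 h2 h3
        rcases hcov y (hnm y h1 h2) ((hfc y).2 h3) with h | h
        · exact Or.inr h
        · exact Or.inl h
    by_cases hpc : p = c
    · -- p = c : propagation around the whole cycle
      subst hpc
      have hstart : (insert (C₀.getVert 0) (insert (C₀.getVert 1) τ0) ∈ Δ.faces) ∨
          (insert (C₀.getVert (C₀.length - 1))
            (insert (C₀.getVert C₀.length) τ0) ∈ Δ.faces) := by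
        obtain ⟨i, hi, he⟩ := hmem_edges _ hHpq
        rw [Sym2.eq_iff] at he
        rcases he with ⟨h1, h2⟩ | ⟨h1, h2⟩
        · have hi0 : i = 0 := by
            by_contra h0
            exact hne_c i (by omega) (by omega) h1.symm
          subst hi0
          left
          rw [hx0, ← h2]
          exact hfq
        · have hin : i + 1 = C₀.length := by
            by_contra h0
            exact hne_c (i+1) (by omega) (by omega) h1.symm
          right
          rw [show C₀.length - 1 = i by omega, hxn, ← h2, Finset.insert_comm]
          exact hfq
      have hup : ∀ s, s + 1 ≤ C₀.length - 1 →
          insert (C₀.getVert s) (insert (C₀.getVert (s+1)) τ0) ∈ Δ.faces →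
          insert (C₀.getVert (s+1)) (insert (C₀.getVert (s+2)) τ0) ∈ Δ.faces := by
        intro s hs hEs
        have hsn : s < C₀.length := by omega
        have hadj1 := hadj s hsn
        have hκ := aux_adj_mem_faces Δ S hadj1
        have hxs : C₀.getVert s ∉ τ0 := hτnot _ hκ.2.1
        have hxs1 : C₀.getVert (s+1) ∉ τ0 := hτnot _ hκ.2.2.1
        have hface : insert (C₀.getVert (s+1)) (insert (C₀.getVert s) τ0) ∈ Δ.faces := by
          rw [Finset.insert_comm]; exact hEs
        obtain ⟨z, hzb, hzτ, hza, hzf, -⟩ :=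
          hstep (C₀.getVert (s+1)) (C₀.getVert s) hxs1 hxs (hadj1.ne.symm) hface
        have hadjz : (Δ.restrict S).graph.Adj (C₀.getVert (s+1)) z :=
          aux_edge_of_face Δ S hτcol hxs1 hzτ (Ne.symm hza) hzf
        have hcov2 := hcover (s+1) (by omega) (by omega) z hadjz
        have hzx : z = C₀.getVert (s+2) := by
          rcases hcov2 with h | h
          · exfalso; apply hzb; rw [h]
            congr 1
          · exact h
        rw [← hzx]
        exact hzf
      have hdown : ∀ s, 1 ≤ s → s ≤ C₀.length - 1 →
          insert (C₀.getVert s) (insert (C₀.getVert (s+1)) τ0) ∈ Δ.faces →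
          insert (C₀.getVert (s-1)) (insert (C₀.getVert s) τ0) ∈ Δ.faces := by
        intro s hs1 hs2 hEs
        have hsn : s < C₀.length := by omega
        have hadj1 := hadj s hsn
        have hκ := aux_adj_mem_faces Δ S hadj1
        have hxs : C₀.getVert s ∉ τ0 := hτnot _ hκ.2.1
        have hxs1 : C₀.getVert (s+1) ∉ τ0 := hτnot _ hκ.2.2.1
        obtain ⟨z, hzb, hzτ, hza, hzf, -⟩ :=
          hstep (C₀.getVert s) (C₀.getVert (s+1)) hxs hxs1 hadj1.ne hEs
        have hadjz : (Δ.restrict S).graph.Adj (C₀.getVert s) z :=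
          aux_edge_of_face Δ S hτcol hxs hzτ (Ne.symm hza) hzf
        have hcov2 := hcover s hs1 hs2 z hadjz
        have hzx : z = C₀.getVert (s-1) := by
          rcases hcov2 with h | h
          · exact h
          · exact absurd h hzb
        rw [Finset.insert_comm, ← hzx]
        exact hzf
      have hEall : ∀ s, s ≤ C₀.length - 1 →
          insert (C₀.getVert s) (insert (C₀.getVert (s+1)) τ0) ∈ Δ.faces := by
        rcases hstart with h0 | h1
        · intro s
          induction s with
          | zero => intro _; exact h0
          | succ k ih => intro hk; exact hup k hk (ih (by omega))
        · have hE1 : insert (C₀.getVert (C₀.length - 1))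
              (insert (C₀.getVert ((C₀.length - 1) + 1)) τ0) ∈ Δ.faces := by
            rw [show (C₀.length - 1) + 1 = C₀.length by omega]
            exact h1
          have hdesc : ∀ j, j ≤ C₀.length - 1 →
              insert (C₀.getVert (C₀.length - 1 - j))
                (insert (C₀.getVert ((C₀.length - 1 - j) + 1)) τ0) ∈ Δ.faces := by
            intro j
            induction j with
            | zero => intro _; exact hE1
            | succ k ih =>
              intro hk
              have hE2 := hdown (C₀.length - 1 - k) (by omega) (by omega) (ih (by omega))
              rw [show C₀.length - 1 - (k+1) = C₀.length - 1 - k - 1 by omega]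
              rw [show C₀.length - 1 - k - 1 + 1 = C₀.length - 1 - k by omega]
              exact hE2
          intro s hs
          have h3 := hdesc (C₀.length - 1 - s) (by omega)
          rwa [show C₀.length - 1 - (C₀.length - 1 - s) = s by omega] at h3
      have hE0 := hEall 0 (by omega)
      have hEn1 := hEall (C₀.length - 1) (le_refl _)
      have hx1τ : C₀.getVert 1 ∉ τ0 :=
        hτnot _ (aux_adj_mem_faces Δ S (hadj 0 (by omega))).2.2.1
      have hxn1τ : C₀.getVert (C₀.length - 1) ∉ τ0 := by
        have h := hadj (C₀.length - 1) (by omega)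
        exact hτnot _ (aux_adj_mem_faces Δ S h).2.1
      have hx1c : C₀.getVert 1 ≠ p := hne_c 1 (by omega) (by omega)
      have hxn1c : C₀.getVert (C₀.length - 1) ≠ p := hne_c _ (by omega) (le_refl _)
      have hx1n1 : C₀.getVert 1 ≠ C₀.getVert (C₀.length - 1) := by
        intro h
        have := hinj 1 (C₀.length - 1) (by omega) (by omega) (by omega) (by omega) h
        omega
      have hf1 : insert p (insert (C₀.getVert 1) τ0) ∈ Δ.faces := by
        have h := hE0
        rw [hx0] at h
        exact h
      have hfn1 : insert p (insert (C₀.getVert (C₀.length - 1)) τ0) ∈ Δ.faces := by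
        have h := hEn1
        rw [show (C₀.length - 1) + 1 = C₀.length by omega, hxn] at h
        rw [Finset.insert_comm]
        exact h
      obtain ⟨z, hzb, hzτ, hza, hzf, hzcov⟩ :=
        hstep p (C₀.getVert 1) hp hx1τ (Ne.symm hx1c) hf1
      have hzn1 : z = C₀.getVert (C₀.length - 1) := by
        rcases hzcov (C₀.getVert (C₀.length - 1)) hxn1τ hxn1c hfn1 with h | h
        · exact absurd h.symm hx1n1
        · exact h.symm
      rcases hzcov r hr (Ne.symm hpr) hfr with rfl | rfl
      · have h := hedge 0 (by omega)
        rwa [hx0] at h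
      · rw [hzn1, Sym2.eq_swap]
        have h := hedge (C₀.length - 1) (by omega)
        rwa [show (C₀.length - 1) + 1 = C₀.length by omega, hxn] at h
    · -- p ≠ c : direct, no propagation needed
      have hadjr : (Δ.restrict S).graph.Adj p r :=
        aux_edge_of_face Δ S hτcol hp hr hpr hfr
      have hfinish : ∀ k, 1 ≤ k → k ≤ C₀.length - 1 → p = C₀.getVert k →
          s(p, r) ∈ C₀.edges := by
        intro k h1 h2 hpk
        subst hpk
        rcases hcover k h1 h2 r hadjr with rfl | rfl
        · rw [Sym2.eq_swap]
          have h := hedge (k-1) (by omega)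
          rwa [show (k-1) + 1 = k by omega] at h
        · exact hedge k (by omega)
      obtain ⟨i, hi, he⟩ := hmem_edges _ hHpq
      rw [Sym2.eq_iff] at he
      rcases he with ⟨h1, h2⟩ | ⟨h1, h2⟩
      · have hi1 : 1 ≤ i := by
          rcases Nat.eq_zero_or_pos i with rfl | h
          · exact absurd (h1.symm ▸ hx0 : p = c).symm (Ne.symm hpc)
          · omega
        exact hfinish i hi1 (by omega) h1
      · have hi1 : i + 1 ≤ C₀.length - 1 := by
          by_contra h0
          have : i + 1 = C₀.length := by omega
          exact hpc (by rw [h1, this, hxn])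
        exact hfinish (i+1) (by omega) hi1 h1
  -- The flip step for facets sharing a ridge.
  have hQstep : ∀ F1 F2 : Finset ℕ, F1 ∈ Δ.toSComplex.facets → F2 ∈ Δ.toSComplex.facets →
      (F1 ∩ F2).card = d → ∀ p q, p ∈ F1 → q ∈ F1 → s(p,q) ∈ C₀.edges →
      p ∈ F2 → q ∉ F2 → ∃ p' ∈ F2, ∃ q' ∈ F2, s(p', q') ∈ C₀.edges := by
    intro F1 F2 hF1 hF2 hcard p q hpF1 hqF1 hpq hpF2 hqF2
    have hadjpq : (Δ.restrict S).graph.Adj p q := C₀.adj_of_mem_edges hpq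
    have hne := hadjpq.ne
    have hc1 : F1.card = d + 1 := hpure F1 hF1
    have hc2 : F2.card = d + 1 := hpure F2 hF2
    have hsd1 : F1 \ (F1 ∩ F2) = {q} := by
      have hc : (F1 \ (F1 ∩ F2)).card = 1 := by
        rw [Finset.card_sdiff_of_subset Finset.inter_subset_left]; omega
      obtain ⟨t, ht⟩ := Finset.card_eq_one.1 hc
      have hqmem : q ∈ F1 \ (F1 ∩ F2) := by simp [hqF1, hqF2]
      rw [ht] at hqmem ⊢
      simp only [Finset.mem_singleton] at hqmem
      rw [hqmem]
    have hsub2 : ∀ t, t ∈ F1 → t ≠ q → t ∈ F2 := by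
      intro t ht htq
      by_contra h2
      have hmem : t ∈ F1 \ (F1 ∩ F2) := by simp [ht, h2]
      rw [hsd1] at hmem
      simp only [Finset.mem_singleton] at hmem
      exact htq hmem
    have hcs2 : (F2 \ (F1 ∩ F2)).card = 1 := by
      rw [Finset.card_sdiff_of_subset Finset.inter_subset_right]; omega
    obtain ⟨r2, hr2⟩ := Finset.card_eq_one.1 hcs2
    have hr2mem : r2 ∈ F2 \ (F1 ∩ F2) := by rw [hr2]; simp
    rw [Finset.mem_sdiff] at hr2mem
    have hr2F1 : r2 ∉ F1 := fun h => hr2mem.2 (Finset.mem_inter.2 ⟨h, hr2mem.1⟩)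
    have hqep : q ∈ F1.erase p := Finset.mem_erase.2 ⟨Ne.symm hne, hqF1⟩
    have hτcard : ((F1.erase p).erase q).card + 1 = d := by
      rw [Finset.card_erase_of_mem hqep, Finset.card_erase_of_mem hpF1, hc1]
      omega
    have hpτ : p ∉ (F1.erase p).erase q := by simp
    have hqτ : q ∉ (F1.erase p).erase q := by simp
    have hτsub : (F1.erase p).erase q ⊆ F1 :=
      (Finset.erase_subset _ _).trans (Finset.erase_subset _ _)
    have hrebuild : insert p (insert q ((F1.erase p).erase q)) = F1 := by
      rw [Finset.insert_erase hqep, Finset.insert_erase hpF1]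
    have hF1f : F1 ∈ Δ.faces := aux_facet_mem_faces hF1
    have hκ := aux_adj_mem_faces Δ S hadjpq
    have hSpair : ({Δ.κ p, Δ.κ q} : Finset (Fin (d+1))) = S := by
      apply Finset.eq_of_subset_of_card_le
      · intro t ht
        simp only [Finset.mem_insert, Finset.mem_singleton] at ht
        rcases ht with rfl | rfl
        exacts [hκ.2.1, hκ.2.2.1]
      · rw [hS, Finset.card_insert_of_notMem (by simp [hκ.2.2.2]),
          Finset.card_singleton]
    have hτcol : ((F1.erase p).erase q).image Δ.κ = Finset.univ \ S := by
      apply Finset.eq_of_subset_of_card_le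
      · intro k hk
        simp only [Finset.mem_image] at hk
        obtain ⟨t, ht, rfl⟩ := hk
        have htF1 : t ∈ F1 := hτsub ht
        simp only [Finset.mem_sdiff, Finset.mem_univ, true_and]
        intro hkS
        rw [← hSpair] at hkS
        simp only [Finset.mem_insert, Finset.mem_singleton] at hkS
        rcases hkS with h | h
        · have heq : t = p := Δ.proper F1 hF1f t htF1 p hpF1 h
          exact hpτ (heq ▸ ht)
        · have heq : t = q := Δ.proper F1 hF1f t htF1 q hqF1 h
          exact hqτ (heq ▸ ht)
      · have himgc : (((F1.erase p).erase q).image Δ.κ).card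
            = ((F1.erase p).erase q).card :=
          Finset.card_image_of_injOn
            (fun a ha b hb hab => Δ.proper F1 hF1f a (hτsub ha) b (hτsub hb) hab)
        rw [himgc, Finset.card_sdiff_of_subset (Finset.subset_univ S), Finset.card_univ,
          Fintype.card_fin, hS]
        omega
    have hr2p : p ≠ r2 := fun h => hr2F1 (h ▸ hpF1)
    have hr2τ : r2 ∉ (F1.erase p).erase q := fun h => hr2F1 (hτsub h)
    have hfr : insert p (insert r2 ((F1.erase p).erase q)) ∈ Δ.faces := by
      apply Δ.down_closed F2 (aux_facet_mem_faces hF2)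
      intro t ht
      simp only [Finset.mem_insert] at ht
      rcases ht with rfl | rfl | ht
      · exact hpF2
      · exact hr2mem.1
      · exact hsub2 t (hτsub ht) (fun h => hqτ (h ▸ ht))
    have hfq2 : insert p (insert q ((F1.erase p).erase q)) ∈ Δ.faces := by
      rw [hrebuild]; exact hF1f
    have hconc := hCORE ((F1.erase p).erase q) hτcard hτcol p q r2 hpτ hqτ hr2τ
      hne hr2p hfq2 hfr hpq
    exact ⟨p, hpF2, r2, hr2mem.1, hconc⟩
  have hQflip : ∀ F1 F2 : Finset ℕ, F1 ∈ Δ.toSComplex.facets → F2 ∈ Δ.toSComplex.facets →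
      (F1 ∩ F2).card = d →
      (∃ p ∈ F1, ∃ q ∈ F1, s(p,q) ∈ C₀.edges) →
      (∃ p ∈ F2, ∃ q ∈ F2, s(p,q) ∈ C₀.edges) := by
    rintro F1 F2 hF1 hF2 hc ⟨p, hp1, q, hq1, hpq⟩
    by_cases hp2 : p ∈ F2
    · by_cases hq2 : q ∈ F2
      · exact ⟨p, hp2, q, hq2, hpq⟩
      · exact hQstep F1 F2 hF1 hF2 hc p q hp1 hq1 hpq hp2 hq2
    · by_cases hq2 : q ∈ F2
      · exact hQstep F1 F2 hF1 hF2 hc q p hq1 hp1 (by rwa [Sym2.eq_swap] at hpq) hq2 hp2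
      · exfalso
        have hcF1 : F1.card = d + 1 := hpure F1 hF1
        have h1 : (F1 \ (F1 ∩ F2)).card = 1 := by
          rw [Finset.card_sdiff_of_subset Finset.inter_subset_left]; omega
        have hpm : p ∈ F1 \ (F1 ∩ F2) := by simp [hp1, hp2]
        have hqm : q ∈ F1 \ (F1 ∩ F2) := by simp [hq1, hq2]
        obtain ⟨t, ht⟩ := Finset.card_eq_one.1 h1
        rw [ht] at hpm hqm
        simp only [Finset.mem_singleton] at hpm hqm
        exact (C₀.adj_of_mem_edges hpq).ne (hpm.trans hqm.symm)
  -- assemble everything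
  have hadj01 : (Δ.restrict S).graph.Adj c (C₀.getVert 1) := by
    have h := hadj 0 (by omega)
    rwa [hx0] at h
  have hf01 : (insert c {C₀.getVert 1} : Finset ℕ) ∈ Δ.faces :=
    (aux_adj_mem_faces Δ S hadj01).1
  obtain ⟨F, hF, hsubF⟩ := aux_exists_facet Δ.toSComplex hf01
  have hQF : ∃ p ∈ F, ∃ q ∈ F, s(p,q) ∈ C₀.edges := by
    refine ⟨c, hsubF (by simp), C₀.getVert 1, hsubF (by simp), ?_⟩
    have h := hedge 0 (by omega)
    rwa [hx0] at h
  have hNBc3 : 2 < (aux_NB (Δ.restrict S) c).card := by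
    rw [← aux_deg_NB]; exact hcdeg
  have hzex : ∃ z ∈ aux_NB (Δ.restrict S) c,
      z ≠ C₀.getVert 1 ∧ z ≠ C₀.getVert (C₀.length - 1) := by
    by_contra hcon
    push_neg at hcon
    have hsub : aux_NB (Δ.restrict S) c ⊆ {C₀.getVert 1, C₀.getVert (C₀.length - 1)} := by
      intro t ht
      simp only [Finset.mem_insert, Finset.mem_singleton]
      by_cases h1 : t = C₀.getVert 1
      · exact Or.inl h1
      · exact Or.inr (hcon t ht h1)
    have hle := Finset.card_le_card hsub
    have h2 : ({C₀.getVert 1, C₀.getVert (C₀.length - 1)} : Finset ℕ).card ≤ 2 :=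
      Finset.card_insert_le _ _ |>.trans (by simp)
    omega
  obtain ⟨z, hzNB, hz1, hzn1⟩ := hzex
  have hadjcz : (Δ.restrict S).graph.Adj c z := aux_mem_NB.1 hzNB
  have hfcz : (insert c {z} : Finset ℕ) ∈ Δ.faces := (aux_adj_mem_faces Δ S hadjcz).1
  obtain ⟨F', hF', hsubF'⟩ := aux_exists_facet Δ.toSComplex hfcz
  have hpath := hfconn F hF F' hF'
  have hQF' : ∃ p ∈ F', ∃ q ∈ F', s(p,q) ∈ C₀.edges := by
    have hgen : ∀ F2, Relation.ReflTransGen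
        (fun α β => α ∈ Δ.toSComplex.facets ∧ β ∈ Δ.toSComplex.facets ∧
          (α ∩ β).card = d) F F2 →
        ∃ p ∈ F2, ∃ q ∈ F2, s(p,q) ∈ C₀.edges := by
      intro F2 h
      induction h with
      | refl => exact hQF
      | tail hab hbc ih => exact hQflip _ _ hbc.1 hbc.2.1 hbc.2.2 ih
    exact hgen F' hpath
  obtain ⟨p', hp', q', hq', hpq'⟩ := hQF'
  have hadj' : (Δ.restrict S).graph.Adj p' q' := C₀.adj_of_mem_edges hpq'
  have hκ' := aux_adj_mem_faces Δ S hadj'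
  have hκcz := aux_adj_mem_faces Δ S hadjcz
  have hF'f : F' ∈ Δ.faces := aux_facet_mem_faces hF'
  have hcF' : c ∈ F' := hsubF' (by simp)
  have hzF' : z ∈ F' := hsubF' (by simp)
  have hSpair : ({Δ.κ c, Δ.κ z} : Finset (Fin (d+1))) = S := by
    apply Finset.eq_of_subset_of_card_le
    · intro t ht
      simp only [Finset.mem_insert, Finset.mem_singleton] at ht
      rcases ht with rfl | rfl
      exacts [hκcz.2.1, hκcz.2.2.1]
    · rw [hS, Finset.card_insert_of_notMem (by simp [hκcz.2.2.2]),
        Finset.card_singleton]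
  have hid : ∀ t, t ∈ F' → Δ.κ t ∈ S → t = c ∨ t = z := by
    intro t ht hts
    rw [← hSpair] at hts
    simp only [Finset.mem_insert, Finset.mem_singleton] at hts
    rcases hts with h | h
    · exact Or.inl (Δ.proper F' hF'f t ht c hcF' h)
    · exact Or.inr (Δ.proper F' hF'f t ht z hzF' h)
  have hcz_edge : s(c, z) ∈ C₀.edges := by
    rcases hid p' hp' hκ'.2.1 with rfl | rfl <;>
      rcases hid q' hq' hκ'.2.2.1 with rfl | rfl
    · exact absurd rfl hadj'.ne
    · exact hpq'
    · rwa [Sym2.eq_swap] at hpq'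
    · exact absurd rfl hadj'.ne
  obtain ⟨i, hi, he⟩ := hmem_edges _ hcz_edge
  rw [Sym2.eq_iff] at he
  rcases he with ⟨h1, h2⟩ | ⟨h1, h2⟩
  · have hi0 : i = 0 := by
      by_contra h0
      exact hne_c i (by omega) (by omega) h1.symm
    subst hi0
    exact hz1 h2
  · have hin : i + 1 = C₀.length := by
      by_contra h0
      exact hne_c (i+1) (by omega) (by omega) h1.symm
    exact hzn1 (by rw [h2]; congr 1; omega)
end
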